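/- arXiv:1601.03605 — 4 statements merged into one kernel-verified Lean document; each statement's English description precedes it below -/
import Mathlib

section
/- For α > 0, τ ≥ 0, and eigenvalues λ_j(τ) = (τ² + j^{2/d})^{-α} (j ≥ 1), the series ∑_{j≥1} (λ_j(τ)/λ_j(0) − 1)² converges if and only if d < 4, i.e. for all spatial dimensions d ∈ {1,2,3}. -/
/-!
With `x_j = j^{2/d} → ∞` the ratio `λ_j(τ)/λ_j(0)` equals `(1 + τ²/x_j)^{-α}`, and
`(1 + r)^{-α} - 1 ~ -α r` as `r → 0` (the derivative at `0`). Hence the summand is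
asymptotically equivalent to `α²τ⁴ j^{-4/d}`, a `p`-series that converges iff `4/d > 1`.
-/

open Filter Topology Asymptotics

lemma one_add_rpow_sub_one_isEquivalent {p : ℝ} (hp : p ≠ 0) :
    (fun r : ℝ => (1 + r) ^ p - 1) ~[𝓝 0] fun r => p * r := by
  have hderiv : HasDerivAt (fun r : ℝ => (1 + r) ^ p) p 0 := by
    simpa using ((hasDerivAt_id 0).const_add 1).rpow_const (p := p) (by norm_num)
  rw [hasDerivAt_iff_isLittleO_nhds_zero] at hderiv
  refine ((isLittleO_const_mul_right_iff hp).mpr hderiv).congr_left fun r => ?_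
  simp [smul_eq_mul, mul_comm]

lemma rpow_add_div_rpow_sub_one_isEquivalent (c : ℝ) {p : ℝ} (hp : p ≠ 0) :
    (fun x : ℝ => (c + x) ^ p / x ^ p - 1) ~[atTop] fun x => p * (c / x) := by
  have hcx : Tendsto (fun x : ℝ => c / x) atTop (𝓝 0) := tendsto_const_nhds.div_atTop tendsto_id
  refine ((one_add_rpow_sub_one_isEquivalent hp).comp_tendsto hcx).congr_left ?_
  filter_upwards [eventually_gt_atTop 0, eventually_ge_atTop (-c)] with x hx hxc
  simp only [Function.comp_apply]
  rw [← Real.div_rpow (by linarith) hx.le, add_div, div_self hx.ne', add_comm]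

/-- For `α > 0`, `τ > 0` and eigenvalues `λ_j(τ) = (τ² + j^{2/d})^{-α}` (`j ≥ 1`),
the series `∑ (λ_j(τ)/λ_j(0) − 1)²` converges if and only if `d < 4`. -/
theorem stmt_0 (d : ℕ) (hd : 1 ≤ d) (α τ : ℝ) (hα : 0 < α) (hτ : 0 < τ) :
    Summable (fun j : ℕ =>
      ((τ ^ 2 + ((j : ℝ) + 1) ^ ((2 : ℝ) / d)) ^ (-α)
        / (((j : ℝ) + 1) ^ ((2 : ℝ) / d)) ^ (-α) - 1) ^ 2) ↔ d < 4 := by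
  have hd₀ : (0 : ℝ) < d := by exact_mod_cast hd
  have hx : Tendsto (fun j : ℕ => ((j : ℝ) + 1) ^ ((2 : ℝ) / d)) atTop atTop :=
    (tendsto_rpow_atTop (by positivity)).comp
      (tendsto_natCast_atTop_atTop.atTop_add tendsto_const_nhds)
  have hequiv : (fun j : ℕ => ((τ ^ 2 + ((j : ℝ) + 1) ^ ((2 : ℝ) / d)) ^ (-α)
        / (((j : ℝ) + 1) ^ ((2 : ℝ) / d)) ^ (-α) - 1) ^ 2)
      ~[atTop] fun j => (α * τ ^ 2) ^ 2 * (1 / |(j : ℝ) + 1| ^ ((4 : ℝ) / d)) := by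
    refine (((rpow_add_div_rpow_sub_one_isEquivalent (τ ^ 2)
      (neg_ne_zero.mpr hα.ne')).comp_tendsto hx).pow 2).congr_right
      (Eventually.of_forall fun j => ?_)
    have hj : (0 : ℝ) ≤ j + 1 := by positivity
    simp only [Pi.pow_apply, Function.comp_apply]
    rw [abs_of_nonneg hj, show (4 : ℝ) / d = 2 / d * (2 : ℕ) by push_cast; ring,
      Real.rpow_mul hj, Real.rpow_natCast]
    ring
  rw [hequiv.summable_iff_nat, summable_mul_left_iff (by positivity),
    Real.summable_one_div_nat_add_rpow, one_lt_div hd₀]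
  exact_mod_cast Iff.rfl
end

section
/- Let {ξ_j} be i.i.d. standard Gaussians, and for d ∈ {2,3}, a_j = (1 + τ² j^{-2/d})^α − 1 ≥ 0 (so ∑ a_j = ∞, ∑ a_j² < ∞), and b_j = log(1 + a_j). Then the series ∑_{j≥1} [a_j ξ_j² − b_j] converges almost surely. -/
/-!
Write `a_j ξ_j² - b_j = a_j (ξ_j² - 1) + (a_j - b_j)`. Since `a_j = O(j^{-2/d})` and `4/d > 1`,
`∑ a_j² < ∞`. The random part is a sum of independent centred variables with variances
`a_j² Var(ξ²)`, so its partial sums form an `L²`-bounded, hence `L¹`-bounded, martingale, which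
converges almost surely. The deterministic part converges because `a - log (1 + a) = O(a²)`.
-/

open MeasureTheory ProbabilityTheory Filter Asymptotics Topology

lemma isBigO_one_add_rpow_sub_one (α : ℝ) :
    (fun x : ℝ => (1 + x) ^ α - 1) =O[𝓝 0] fun x => x := by
  have h : DifferentiableAt ℝ (fun x : ℝ => (1 + x) ^ α) 0 :=
    (differentiableAt_id.const_add 1).rpow_const (Or.inl (by norm_num))
  simpa using h.isBigO_sub

lemma Real.isBigO_self_sub_log_one_add :
    (fun x : ℝ => x - Real.log (1 + x)) =O[𝓝 0] fun x => x ^ 2 := by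
  refine isBigO_iff.2 ⟨2, ?_⟩
  filter_upwards [eventually_norm_sub_lt (0 : ℝ) (by norm_num : (0 : ℝ) < 1 / 2)] with x hx
  rw [sub_zero, Real.norm_eq_abs] at hx
  have h := Real.abs_log_sub_add_sum_range_le (x := -x) (by rw [abs_neg]; linarith) 1
  rw [abs_neg] at h
  simp only [Finset.range_one, Finset.sum_singleton, zero_add, pow_one, Nat.cast_zero, div_one,
    sub_neg_eq_add] at h
  have hden : |x| ^ 2 / (1 - |x|) ≤ 2 * x ^ 2 := by
    rw [div_le_iff₀ (by linarith), sq_abs]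
    nlinarith [sq_nonneg x]
  rw [Real.norm_eq_abs, Real.norm_eq_abs, abs_of_nonneg (sq_nonneg x), abs_sub_comm,
    sub_eq_neg_add]
  linarith

lemma tendsto_zero_of_summable_sq {a : ℕ → ℝ} (ha : Summable fun j => a j ^ 2) :
    Tendsto a atTop (𝓝 0) := by
  have h := (Real.continuous_sqrt.tendsto 0).comp ha.tendsto_atTop_zero
  simp only [Real.sqrt_zero, Function.comp_def, Real.sqrt_sq_eq_abs] at h
  exact tendsto_zero_iff_abs_tendsto_zero a |>.2 h

lemma summable_sub_log_one_add {a : ℕ → ℝ} (ha : Summable fun j => a j ^ 2) :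
    Summable fun j => a j - Real.log (1 + a j) :=
  summable_of_isBigO_nat ha
    (Real.isBigO_self_sub_log_one_add.comp_tendsto (tendsto_zero_of_summable_sq ha))

lemma summable_sq_add_one_rpow_neg {p : ℝ} (hp : 1 / 2 < p) :
    Summable fun j : ℕ => (((j : ℝ) + 1) ^ (-p)) ^ 2 := by
  have h := (summable_nat_add_iff 1).2 (Real.summable_nat_rpow.2 (by linarith : -(2 * p) < -1))
  refine h.congr fun j => ?_
  push_cast
  rw [← Real.rpow_natCast, ← Real.rpow_mul (by positivity)]
  ring_nf

lemma summable_sq_one_add_mul_rpow_sub_one (α c : ℝ) {p : ℝ} (hp : 1 / 2 < p) :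
    Summable fun j : ℕ => ((1 + c * ((j : ℝ) + 1) ^ (-p)) ^ α - 1) ^ 2 := by
  have hx : Tendsto (fun j : ℕ => c * ((j : ℝ) + 1) ^ (-p)) atTop (𝓝 0) := by
    have := (tendsto_rpow_neg_atTop (by linarith : 0 < p)).comp
      (tendsto_atTop_add_const_right _ 1 tendsto_natCast_atTop_atTop)
    simpa using this.const_mul c
  refine summable_of_isBigO_nat ((summable_sq_add_one_rpow_neg hp).mul_left (c ^ 2)) ?_
  have h := ((isBigO_one_add_rpow_sub_one α).comp_tendsto hx).pow 2
  simpa [mul_pow] using h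

section PartialSums

variable {Ω : Type*} [MeasurableSpace Ω] {P : Measure Ω} [IsProbabilityMeasure P]
  {Y : ℕ → Ω → ℝ}

lemma martingale_sum_range_succ_of_iIndepFun (hsm : ∀ j, StronglyMeasurable (Y j))
    (hindep : iIndepFun Y P) (hint : ∀ j, Integrable (Y j) P) (hmean : ∀ j, P[Y j] = 0) :
    Martingale (fun n => ∑ j ∈ Finset.range (n + 1), Y j) (Filtration.natural Y hsm) P := by
  refine martingale_of_condExp_sub_eq_zero_nat (fun n => ?_)
    (fun n => integrable_finsetSum' _ fun j _ => hint j) fun n => ?_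
  · refine Finset.stronglyMeasurable_sum _ fun j hj =>
      (Filtration.stronglyAdapted_natural hsm j).mono ((Filtration.natural Y hsm).mono ?_)
    exact Nat.lt_succ_iff.mp (Finset.mem_range.mp hj)
  · rw [Finset.sum_range_succ _ (n + 1), add_sub_cancel_left]
    exact (hindep.condExp_natural_ae_eq_of_lt hsm (Nat.lt_succ_self n)).trans
      (by simp [hmean]; rfl)

lemma eLpNorm_one_le_of_integral_eq_zero {f : Ω → ℝ} (hf : MemLp f 2 P) (h0 : P[f] = 0) :
    eLpNorm f 1 P ≤ ENNReal.ofReal ((1 + Var[f; P]) / 2) := by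
  have hsq : Integrable (fun ω => f ω ^ 2) P := hf.integrable_sq
  have hint : Integrable f P := hf.integrable one_le_two
  have hnorm : ∫ ω, ‖f ω‖ ∂P ≤ ∫ ω, (1 + f ω ^ 2) / 2 ∂P :=
    integral_mono hint.norm (((integrable_const 1).add hsq).div_const 2) fun ω => by
      rw [Real.norm_eq_abs]
      nlinarith [sq_nonneg (|f ω| - 1), sq_abs (f ω)]
  have hvar : Var[f; P] = ∫ ω, f ω ^ 2 ∂P := by
    rw [variance_eq_sub hf, h0]
    simp
  rw [eLpNorm_one_eq_lintegral_enorm, ← ofReal_integral_norm_eq_lintegral_enorm hint]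
  refine ENNReal.ofReal_le_ofReal (hnorm.trans_eq ?_)
  rw [integral_div, integral_add (integrable_const 1) hsq, hvar]
  simp

lemma ae_exists_tendsto_sum_of_iIndepFun_of_stronglyMeasurable
    (hsm : ∀ j, StronglyMeasurable (Y j)) (hindep : iIndepFun Y P)
    (hmem : ∀ j, MemLp (Y j) 2 P) (hmean : ∀ j, P[Y j] = 0)
    (hvar : Summable fun j => Var[Y j; P]) :
    ∀ᵐ ω ∂P, ∃ L, Tendsto (fun n => ∑ j ∈ Finset.range n, Y j ω) atTop (𝓝 L) := by
  have hint : ∀ j, Integrable (Y j) P := fun j => (hmem j).integrable one_le_two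
  set R := ((1 + ∑' j, Var[Y j; P]) / 2).toNNReal
  have hbdd : ∀ n, eLpNorm (∑ j ∈ Finset.range (n + 1), Y j) 1 P ≤ R := fun n => by
    refine (eLpNorm_one_le_of_integral_eq_zero (memLp_finsetSum' _ fun j _ => hmem j)
      ?_).trans (ENNReal.ofReal_le_ofReal ?_)
    · simp only [Finset.sum_apply]
      rw [integral_finsetSum _ fun j _ => hint j]
      simp [hmean]
    · rw [IndepFun.variance_sum (fun j _ => hmem j) fun i _ j _ hij => hindep.indepFun hij]
      gcongr
      exact hvar.sum_le_tsum _ fun j _ => variance_nonneg _ _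
  filter_upwards [(martingale_sum_range_succ_of_iIndepFun hsm hindep hint
    hmean).submartingale.exists_ae_tendsto_of_bdd hbdd] with ω ⟨L, hL⟩
  refine ⟨L, (tendsto_add_atTop_iff_nat 1).1 ?_⟩
  simpa only [Finset.sum_apply] using hL

theorem ae_exists_tendsto_sum_of_iIndepFun (hindep : iIndepFun Y P)
    (hmem : ∀ j, MemLp (Y j) 2 P) (hmean : ∀ j, P[Y j] = 0)
    (hvar : Summable fun j => Var[Y j; P]) :
    ∀ᵐ ω ∂P, ∃ L, Tendsto (fun n => ∑ j ∈ Finset.range n, Y j ω) atTop (𝓝 L) := by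
  set Z := fun j => (hmem j).aestronglyMeasurable.mk (Y j)
  have hYZ : ∀ j, Y j =ᵐ[P] Z j := fun j => (hmem j).aestronglyMeasurable.ae_eq_mk
  have hZ := ae_exists_tendsto_sum_of_iIndepFun_of_stronglyMeasurable
    (fun j => (hmem j).aestronglyMeasurable.stronglyMeasurable_mk) (hindep.congr hYZ)
    (fun j => (hmem j).ae_eq (hYZ j)) (fun j => integral_congr_ae (hYZ j) ▸ hmean j)
    (by simpa only [variance_congr (hYZ _)] using hvar)
  filter_upwards [hZ, ae_all_iff.2 hYZ] with ω ⟨L, hL⟩ hω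
  exact ⟨L, by simpa only [hω] using hL⟩

end PartialSums

lemma memLp_id_map_sq_sub_one_gaussianReal :
    MemLp id 2 ((gaussianReal 0 1).map fun x => x ^ 2 - 1) := by
  have : ENNReal.HolderTriple 4 4 2 := ⟨by
    rw [show (4 : ENNReal) = 2 * 2 by norm_num, ENNReal.mul_inv (by simp) (by simp), ← mul_add,
      ENNReal.inv_two_add_inv_two, mul_one]⟩
  have h4 : MemLp id 4 (gaussianReal 0 1) := memLp_id_gaussianReal 4
  refine (memLp_map_measure_iff aestronglyMeasurable_id (by fun_prop)).2 ?_
  have h := (h4.mul h4 (r := 2)).sub (memLp_const (1 : ℝ))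
  convert h using 1
  ext x
  simp [sq]

lemma integral_id_map_sq_sub_one_gaussianReal :
    ∫ x, x ∂((gaussianReal 0 1).map fun x => x ^ 2 - 1) = 0 := by
  have hsq : ∫ x, x ^ 2 ∂(gaussianReal 0 1) = 1 := by
    have h := variance_eq_sub (memLp_id_gaussianReal (μ := 0) (v := 1) 2)
    simp only [variance_id_gaussianReal, Pi.pow_apply, id_eq, integral_id_gaussianReal] at h
    simpa using h.symm
  rw [integral_map (f := fun x => x) (by fun_prop) (by fun_prop), integral_sub
    ((memLp_id_gaussianReal 2).integrable_sq (f := fun x => x)) (integrable_const 1), hsq]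
  simp

theorem ae_exists_tendsto_sum_mul_of_iIndepFun {Ω : Type*} [MeasurableSpace Ω] {P : Measure Ω}
    [IsProbabilityMeasure P] {ζ : ℕ → Ω → ℝ} {ν : Measure ℝ} (hindep : iIndepFun ζ P)
    (hlaw : ∀ j, HasLaw (ζ j) ν P) (hmem : MemLp id 2 ν) (hmean : ∫ x, x ∂ν = 0)
    {c : ℕ → ℝ} (hc : Summable fun j => c j ^ 2) :
    ∀ᵐ ω ∂P, ∃ L, Tendsto (fun n => ∑ j ∈ Finset.range n, c j * ζ j ω) atTop (𝓝 L) := by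
  have hmemζ : ∀ j, MemLp (ζ j) 2 P := fun j =>
    ((hlaw j).map_eq ▸ hmem).comp_of_map (hlaw j).aemeasurable
  refine ae_exists_tendsto_sum_of_iIndepFun (Y := fun j ω => c j * ζ j ω)
    (hindep.comp (fun j x => c j * x) fun j => by fun_prop)
    (fun j => (hmemζ j).const_mul (c j)) (fun j => ?_) ?_
  · rw [integral_const_mul, (hlaw j).integral_eq, hmean, mul_zero]
  · simp_rw [variance_const_mul, (hlaw _).variance_eq]
    exact hc.mul_right _

theorem stmt_9_general {Ω : Type*} [MeasurableSpace Ω] (P : Measure Ω) [IsProbabilityMeasure P]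
    (ξ : ℕ → Ω → ℝ)
    (hindep : iIndepFun ξ P)
    (hdist : ∀ j, Measure.map (ξ j) P = gaussianReal 0 1)
    (d : ℕ) (hd : d = 2 ∨ d = 3) (α τ : ℝ)
    (a b : ℕ → ℝ)
    (ha : ∀ j, a j = (1 + τ ^ 2 * ((j : ℝ) + 1) ^ (-(2 : ℝ) / d)) ^ α - 1)
    (hb : ∀ j, b j = Real.log (1 + a j)) :
    ∀ᵐ ω ∂P, ∃ L : ℝ,
      Tendsto (fun n => ∑ j ∈ Finset.range n, (a j * (ξ j ω) ^ 2 - b j)) atTop (nhds L) := by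
  have hlaw : ∀ j, HasLaw (fun ω => ξ j ω ^ 2 - 1) ((gaussianReal 0 1).map fun x => x ^ 2 - 1) P :=
    fun j => HasLaw.fun_comp (Y := fun x => x ^ 2 - 1) ⟨by fun_prop, rfl⟩
      ⟨aemeasurable_of_map_neZero (by rw [hdist j]; infer_instance), hdist j⟩
  have ha2 : Summable fun j => a j ^ 2 := by
    simp only [ha, neg_div]
    exact summable_sq_one_add_mul_rpow_sub_one α (τ ^ 2) (by rcases hd with rfl | rfl <;> norm_num)
  have hab : Summable fun j => a j - b j := by
    simpa only [hb] using summable_sub_log_one_add ha2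
  filter_upwards [ae_exists_tendsto_sum_mul_of_iIndepFun (ζ := fun j ω => ξ j ω ^ 2 - 1)
    (hindep.comp (fun _ x => x ^ 2 - 1) fun _ => by fun_prop) hlaw
    memLp_id_map_sq_sub_one_gaussianReal integral_id_map_sq_sub_one_gaussianReal ha2]
    with ω ⟨L, hL⟩
  refine ⟨L + ∑' j, (a j - b j), (hL.add hab.hasSum.tendsto_sum_nat).congr fun n => ?_⟩
  rw [← Finset.sum_add_distrib]
  exact Finset.sum_congr rfl fun j _ => by ring

/-- For `d ∈ {2,3}`, with `a_j = (1 + τ² j^{-2/d})^α − 1 ≥ 0` and `b_j = log(1 + a_j)`,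
and `{ξ_j}` i.i.d. standard Gaussians, the series `∑ [a_j ξ_j² − b_j]`
converges almost surely. -/
theorem stmt_9 {Ω : Type*} [MeasurableSpace Ω] (P : Measure Ω) [IsProbabilityMeasure P]
    (ξ : ℕ → Ω → ℝ)
    (hindep : iIndepFun ξ P)
    (hdist : ∀ j, Measure.map (ξ j) P = gaussianReal 0 1)
    (d : ℕ) (hd : d = 2 ∨ d = 3) (α τ : ℝ) (hα : 0 < α) (hτ : 0 < τ)
    (a b : ℕ → ℝ)
    (ha : ∀ j, a j = (1 + τ ^ 2 * ((j : ℝ) + 1) ^ (-(2 : ℝ) / d)) ^ α - 1)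
    (hb : ∀ j, b j = Real.log (1 + a j)) :
    ∀ᵐ ω ∂P, ∃ L : ℝ,
      Tendsto (fun n => ∑ j ∈ Finset.range n, (a j * (ξ j ω) ^ 2 - b j)) atTop (nhds L) :=
  stmt_9_general P ξ hindep hdist d hd α τ a b ha hb
end

section
/- Let u, u_ε ∈ C(D) with ‖u_ε − u‖_∞ < ε, and suppose |{x ∈ D : u(x) = c_i}| = 0 for all interior thresholds c_1,…,c_{n−1}. Then ‖F(u_ε) − F(u)‖_{L^p(D)} → 0 as ε → 0, for every 1 ≤ p < ∞; i.e., the level set map F is continuous at u in L^p whenever the level sets of u at the threshold values are Lebesgue-null. -/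
open MeasureTheory Filter
open scoped BigOperators

/-- The level set map `F(u) = ∑ κ_i 1_{D_i(u)}`, where
`D_i(u) = {x ∈ D : c_{i−1} ≤ u(x) < c_i}` for extended-real thresholds
`−∞ = c_0 < c_1 < ⋯ < c_n = ∞`. -/
noncomputable def levelSetMap {d n : ℕ} (D : Set (EuclideanSpace ℝ (Fin d)))
    (c : Fin (n + 1) → EReal) (κ : Fin n → ℝ)
    (u : EuclideanSpace ℝ (Fin d) → ℝ) (x : EuclideanSpace ℝ (Fin d)) : ℝ :=
  ∑ i : Fin n, κ i *
    Set.indicator {y ∈ D | c i.castSucc ≤ (u y : EReal) ∧ (u y : EReal) < c i.succ}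
      (fun _ => (1 : ℝ)) x

/-! For almost every `x ∈ D` the value `u x` avoids every threshold: the interior ones by the
null-level-set hypothesis, `c 0 = ⊥` and `c n = ⊤` because `u x` is real. Membership of a real
number in the bands `[c_{i-1}, c_i)` is locally constant away from the thresholds, so
`F(u_ε)(x) = F(u)(x)` once `ε` is small. As `|F(u_ε) - F(u)|` is bounded by `2 ∑ |κ_i|` and `D`
has finite measure, dominated convergence gives the limit. -/

open Topology

theorem eventually_le_coe_iff_of_coe_ne {e : EReal} {r : ℝ} (h : (r : EReal) ≠ e) :
    ∀ᶠ w : ℝ in 𝓝 r, e ≤ (w : EReal) ↔ e ≤ (r : EReal) := by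
  have hcoe := continuous_coe_real_ereal.tendsto r
  rcases h.lt_or_gt with hlt | hgt
  · filter_upwards [hcoe.eventually (eventually_lt_nhds hlt)] with w hw
    exact iff_of_false hw.not_ge hlt.not_ge
  · filter_upwards [hcoe.eventually (lt_mem_nhds hgt)] with w hw
    exact iff_of_true hw.le hgt.le

theorem tendsto_nhdsGT_zero_of_abs_sub_lt {f : ℝ → ℝ} {a : ℝ}
    (h : ∀ ε, 0 < ε → |f ε - a| < ε) : Tendsto f (𝓝[>] 0) (𝓝 a) := by
  refine Metric.tendsto_nhds.2 fun δ hδ => ?_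
  filter_upwards [Ioo_mem_nhdsGT hδ] with ε hε
  exact (h ε hε.1).trans hε.2

theorem ae_restrict_coe_ne_thresholds {α : Type*} [MeasurableSpace α] {μ : Measure α}
    {D : Set α} (hD : MeasurableSet D) {n : ℕ} {c : Fin (n + 1) → EReal}
    (hbot : c 0 = ⊥) (htop : c (Fin.last n) = ⊤) {u : α → ℝ}
    (hnull : ∀ i : Fin (n + 1), i ≠ 0 → i ≠ Fin.last n → μ {x ∈ D | (u x : EReal) = c i} = 0) :
    ∀ᵐ x ∂μ.restrict D, ∀ j, (u x : EReal) ≠ c j := by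
  refine ae_all_iff.2 fun j => ?_
  rcases eq_or_ne j 0 with rfl | h0
  · exact .of_forall fun x => hbot ▸ EReal.coe_ne_bot _
  rcases eq_or_ne j (Fin.last n) with rfl | hlast
  · exact .of_forall fun x => htop ▸ EReal.coe_ne_top _
  refine (ae_restrict_iff'₀ hD.nullMeasurableSet).2 ?_
  filter_upwards [measure_eq_zero_iff_ae_notMem.1 (hnull j h0 hlast)] with x hx hxD heq
  exact hx ⟨hxD, heq⟩

section LevelSetMap

variable {d n : ℕ} (D : Set (EuclideanSpace ℝ (Fin d))) (c : Fin (n + 1) → EReal) (κ : Fin n → ℝ)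

theorem measurable_levelSetMap (hD : MeasurableSet D) {u : EuclideanSpace ℝ (Fin d) → ℝ}
    (hu : Measurable u) : Measurable (levelSetMap D c κ u) := by
  have hu' : Measurable fun y => (u y : EReal) := measurable_coe_real_ereal.comp hu
  refine Finset.measurable_sum _ fun i _ => measurable_const.mul (measurable_const.indicator ?_)
  exact hD.inter
    ((measurableSet_le measurable_const hu').inter (measurableSet_lt hu' measurable_const))

theorem abs_levelSetMap_le (u : EuclideanSpace ℝ (Fin d) → ℝ) (x : EuclideanSpace ℝ (Fin d)) :
    |levelSetMap D c κ u x| ≤ ∑ i, |κ i| := by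
  classical
  refine (Finset.abs_sum_le_sum_abs _ _).trans (Finset.sum_le_sum fun i _ => ?_)
  rw [abs_mul]
  refine mul_le_of_le_one_right (abs_nonneg _) ?_
  rw [Set.indicator_apply]
  split_ifs <;> simp

theorem abs_levelSetMap_sub_le (u w : EuclideanSpace ℝ (Fin d) → ℝ)
    (x : EuclideanSpace ℝ (Fin d)) :
    |levelSetMap D c κ w x - levelSetMap D c κ u x| ≤ 2 * ∑ i, |κ i| := by
  linarith [abs_sub (levelSetMap D c κ w x) (levelSetMap D c κ u x),
    abs_levelSetMap_le D c κ w x, abs_levelSetMap_le D c κ u x]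

theorem levelSetMap_eq_of_forall_le_iff {u w : EuclideanSpace ℝ (Fin d) → ℝ}
    {x : EuclideanSpace ℝ (Fin d)} (h : ∀ j, c j ≤ (w x : EReal) ↔ c j ≤ (u x : EReal)) :
    levelSetMap D c κ w x = levelSetMap D c κ u x := by
  classical
  refine Finset.sum_congr rfl fun i _ => ?_
  simp only [Set.indicator_apply, Set.mem_ofPred_eq, ← not_le, h]

theorem eventually_levelSetMap_eq {α : Type*} {l : Filter α}
    {v : α → EuclideanSpace ℝ (Fin d) → ℝ} {u : EuclideanSpace ℝ (Fin d) → ℝ}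
    {x : EuclideanSpace ℝ (Fin d)} (hx : ∀ j, (u x : EReal) ≠ c j)
    (hv : Tendsto (fun a => v a x) l (𝓝 (u x))) :
    ∀ᶠ a in l, levelSetMap D c κ (v a) x = levelSetMap D c κ u x :=
  (hv.eventually (eventually_all.2 fun j => eventually_le_coe_iff_of_coe_ne (hx j))).mono
    fun _ ha => levelSetMap_eq_of_forall_le_iff D c κ ha

end LevelSetMap

theorem stmt_17_general {d n : ℕ} (D : Set (EuclideanSpace ℝ (Fin d)))
    (hDmeas : MeasurableSet D) (hDbdd : Bornology.IsBounded D)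
    (c : Fin (n + 1) → EReal)
    (hbot : c 0 = ⊥) (htop : c (Fin.last n) = ⊤) (κ : Fin n → ℝ)
    (u : EuclideanSpace ℝ (Fin d) → ℝ) (hu : Continuous u)
    (hnull : ∀ i : Fin (n + 1), i ≠ 0 → i ≠ Fin.last n →
      volume {x ∈ D | (u x : EReal) = c i} = 0)
    (p : ℝ) (hp : 1 ≤ p)
    (v : ℝ → EuclideanSpace ℝ (Fin d) → ℝ)
    (hvcont : ∀ ε : ℝ, 0 < ε → Continuous (v ε))
    (hvclose : ∀ ε : ℝ, 0 < ε → ∀ x ∈ D, |v ε x - u x| < ε) :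
    Tendsto (fun ε : ℝ =>
        ∫ x in D, |levelSetMap D c κ (v ε) x - levelSetMap D c κ u x| ^ p)
      (nhdsWithin 0 (Set.Ioi 0)) (nhds 0) := by
  have hp0 : 0 < p := zero_lt_one.trans_le hp
  have hmeas : ∀ ε ∈ Set.Ioi (0 : ℝ), AEStronglyMeasurable
      (fun x => |levelSetMap D c κ (v ε) x - levelSetMap D c κ u x| ^ p) (volume.restrict D) :=
    fun ε hε => (((measurable_levelSetMap D c κ hDmeas (hvcont ε hε).measurable).sub
      (measurable_levelSetMap D c κ hDmeas hu.measurable)).abs.pow_const p).aestronglyMeasurable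
  have hbound : ∀ ε x, ‖|levelSetMap D c κ (v ε) x - levelSetMap D c κ u x| ^ p‖
      ≤ (2 * ∑ i, |κ i|) ^ p := fun ε x => by
    rw [Real.norm_of_nonneg (by positivity)]
    exact Real.rpow_le_rpow (abs_nonneg _) (abs_levelSetMap_sub_le D c κ u (v ε) x) hp0.le
  have hlim : ∀ᵐ x ∂volume.restrict D, Tendsto
      (fun ε => |levelSetMap D c κ (v ε) x - levelSetMap D c κ u x| ^ p) (𝓝[>] 0) (𝓝 0) := by
    filter_upwards [ae_restrict_mem hDmeas, ae_restrict_coe_ne_thresholds hDmeas hbot htop hnull]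
      with x hxD hx
    have heq := eventually_levelSetMap_eq D c κ hx
      (tendsto_nhdsGT_zero_of_abs_sub_lt fun ε hε => hvclose ε hε x hxD)
    exact tendsto_const_nhds.congr' (heq.mono fun ε hε => by simp [hε, hp0.ne'])
  simpa using tendsto_integral_filter_of_dominated_convergence _
    (eventually_mem_nhdsWithin.mono hmeas) (.of_forall fun ε => .of_forall (hbound ε))
    (integrableOn_const hDbdd.measure_lt_top.ne) hlim

/-- If `u` is continuous on the bounded domain `D`, its level sets at the interior
threshold values are Lebesgue-null, and `u_ε` are continuous with `‖u_ε − u‖_∞ < ε`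
on `D`, then `‖F(u_ε) − F(u)‖_{L^p(D)} → 0` as `ε → 0`, for every `1 ≤ p < ∞`. -/
theorem stmt_17 {d n : ℕ} (D : Set (EuclideanSpace ℝ (Fin d)))
    (hDmeas : MeasurableSet D) (hDbdd : Bornology.IsBounded D)
    (c : Fin (n + 1) → EReal) (hmono : StrictMono c)
    (hbot : c 0 = ⊥) (htop : c (Fin.last n) = ⊤) (κ : Fin n → ℝ)
    (u : EuclideanSpace ℝ (Fin d) → ℝ) (hu : Continuous u)
    (hnull : ∀ i : Fin (n + 1), i ≠ 0 → i ≠ Fin.last n →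
      volume {x ∈ D | (u x : EReal) = c i} = 0)
    (p : ℝ) (hp : 1 ≤ p)
    (v : ℝ → EuclideanSpace ℝ (Fin d) → ℝ)
    (hvcont : ∀ ε : ℝ, 0 < ε → Continuous (v ε))
    (hvclose : ∀ ε : ℝ, 0 < ε → ∀ x ∈ D, |v ε x - u x| < ε) :
    Tendsto (fun ε : ℝ =>
        ∫ x in D, |levelSetMap D c κ (v ε) x - levelSetMap D c κ u x| ^ p)
      (nhdsWithin 0 (Set.Ioi 0)) (nhds 0) :=
  stmt_17_general D hDmeas hDbdd c hbot htop κ u hu hnull p hp v hvcont hvclose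
end

section
/- Let μ₀ be a probability measure on a metric space U, y ∈ R^J, and Φ: U × R^J → R measurable with 0 ≤ Φ(u; y) ≤ K(r) whenever |y| < r, and |Φ(u; y₁) − Φ(u; y₂)| ≤ C(r)|y₁ − y₂| uniformly in u for |y₁|,|y₂| < r. Define posteriors μ^y by dμ^y/dμ₀ = Z(y)^{−1} exp(−Φ(u; y)) with Z(y) = ∫ exp(−Φ(u;y)) dμ₀. Then Z(y) > 0 and the Hellinger distance satisfies d_Hell(μ^{y₁}, μ^{y₂}) ≤ C'(r)|y₁ − y₂| for all |y₁|,|y₂| < r. -/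
open MeasureTheory

lemma aux_exp_lip {a b : ℝ} (ha : 0 ≤ a) (hb : 0 ≤ b) :
    |Real.exp (-a) - Real.exp (-b)| ≤ |a - b| := by
  wlog h : b ≤ a generalizing a b
  · rw [abs_sub_comm, abs_sub_comm a b]; exact this hb ha (le_of_not_ge h)
  have h1 : Real.exp (-a) = Real.exp (b - a) * Real.exp (-b) := by
    rw [← Real.exp_add]; ring_nf
  have h2 : b - a + 1 ≤ Real.exp (b - a) := Real.add_one_le_exp _
  have h3 : Real.exp (-b) ≤ 1 := Real.exp_le_one_iff.2 (by linarith)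
  have h4 : 0 < Real.exp (-b) := Real.exp_pos _
  have h5 : Real.exp (-a) ≤ Real.exp (-b) := Real.exp_le_exp.2 (by linarith)
  rw [abs_of_nonpos (by linarith), abs_of_nonneg (by linarith)]
  nlinarith

lemma aux_sqrt_lip {m x y : ℝ} (hm : 0 < m) (hx : m ≤ x) (hy : m ≤ y) :
    |Real.sqrt x - Real.sqrt y| ≤ |x - y| / (2 * Real.sqrt m) := by
  have hx0 : 0 ≤ x := by linarith
  have hy0 : 0 ≤ y := by linarith
  have hsx : Real.sqrt m ≤ Real.sqrt x := Real.sqrt_le_sqrt hx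
  have hsy : Real.sqrt m ≤ Real.sqrt y := Real.sqrt_le_sqrt hy
  have hsm : 0 < Real.sqrt m := Real.sqrt_pos.2 hm
  have hsum : 0 < Real.sqrt x + Real.sqrt y := by linarith
  have key : |Real.sqrt x - Real.sqrt y| * (Real.sqrt x + Real.sqrt y) = |x - y| := by
    rw [← abs_of_pos hsum, ← abs_mul]
    congr 1
    have h1 : Real.sqrt x ^ 2 = x := Real.sq_sqrt hx0
    have h2 : Real.sqrt y ^ 2 = y := Real.sq_sqrt hy0
    nlinarith
  rw [le_div_iff₀ (by positivity)]
  calc |Real.sqrt x - Real.sqrt y| * (2 * Real.sqrt m)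
      ≤ |Real.sqrt x - Real.sqrt y| * (Real.sqrt x + Real.sqrt y) :=
        mul_le_mul_of_nonneg_left (by linarith) (abs_nonneg _)
    _ = |x - y| := key
set_option maxHeartbeats 1000000 in
/-- Well-posedness of the Bayesian posterior: if `0 ≤ Φ(u;y) ≤ K(r)` whenever `|y| < r`,
and `Φ` is locally Lipschitz in `y` uniformly in `u`, then the normalization constant
`Z(y) = ∫ exp(−Φ(u;y)) dμ₀` is positive and the posteriors `dμ^y/dμ₀ = Z(y)⁻¹ exp(−Φ(u;y))`
are locally Lipschitz in `y` in the Hellinger distance: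
`d_Hell(μ^{y₁}, μ^{y₂}) ≤ C'(r)|y₁ − y₂|` for `|y₁|, |y₂| < r`. -/
theorem stmt_19 {U : Type*} [MetricSpace U] [MeasurableSpace U] [BorelSpace U]
    (μ₀ : Measure U) [IsProbabilityMeasure μ₀] {J : ℕ}
    (Φ : U → EuclideanSpace ℝ (Fin J) → ℝ)
    (hmeas : ∀ y, Measurable fun u => Φ u y)
    (K : ℝ → ℝ)
    (hbound : ∀ r > 0, ∀ u, ∀ y : EuclideanSpace ℝ (Fin J), ‖y‖ < r →
      0 ≤ Φ u y ∧ Φ u y ≤ K r)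
    (C : ℝ → ℝ)
    (hlip : ∀ r > 0, ∀ u, ∀ y₁ y₂ : EuclideanSpace ℝ (Fin J), ‖y₁‖ < r → ‖y₂‖ < r →
      |Φ u y₁ - Φ u y₂| ≤ C r * ‖y₁ - y₂‖)
    (Z : EuclideanSpace ℝ (Fin J) → ℝ)
    (hZ : ∀ y, Z y = ∫ u, Real.exp (-Φ u y) ∂μ₀) :
    ∀ r > 0,
      (∀ y : EuclideanSpace ℝ (Fin J), ‖y‖ < r → 0 < Z y) ∧
      ∃ C' > 0, ∀ y₁ y₂ : EuclideanSpace ℝ (Fin J), ‖y₁‖ < r → ‖y₂‖ < r →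
        Real.sqrt ((1 / 2) * ∫ u,
            (Real.sqrt (Real.exp (-Φ u y₁) / Z y₁)
              - Real.sqrt (Real.exp (-Φ u y₂) / Z y₂)) ^ 2 ∂μ₀)
          ≤ C' * ‖y₁ - y₂‖ := by
  intro r hr
  have hU : Nonempty U := μ₀.nonempty_of_neZero
  obtain ⟨u₀⟩ := hU
  have hKr : 0 ≤ K r := by
    have h := hbound r hr u₀ 0 (by simpa using hr)
    linarith [h.1, h.2]
  set m : ℝ := Real.exp (-K r) with hm
  have hm0 : 0 < m := Real.exp_pos _
  have hm1 : m ≤ 1 := Real.exp_le_one_iff.2 (by linarith)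
  set s : ℝ := Real.exp (-K r / 2) with hs
  have hs0 : 0 < s := Real.exp_pos _
  have hs1 : s ≤ 1 := Real.exp_le_one_iff.2 (by linarith)
  have hsm : Real.sqrt m = s := by
    rw [hm, hs, ← Real.exp_half]
  -- pointwise bounds on the density
  have hfb : ∀ y : EuclideanSpace ℝ (Fin J), ‖y‖ < r → ∀ u,
      m ≤ Real.exp (-Φ u y) ∧ Real.exp (-Φ u y) ≤ 1 := by
    intro y hy u
    obtain ⟨h1, h2⟩ := hbound r hr u y hy
    exact ⟨Real.exp_le_exp.2 (by linarith), Real.exp_le_one_iff.2 (by linarith)⟩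
  have hint : ∀ y : EuclideanSpace ℝ (Fin J), ‖y‖ < r →
      Integrable (fun u => Real.exp (-Φ u y)) μ₀ := by
    intro y hy
    refine Integrable.mono' (integrable_const 1)
      ((hmeas y).neg.exp.aestronglyMeasurable) ?_
    filter_upwards with u
    rw [Real.norm_eq_abs, abs_of_pos (Real.exp_pos _)]
    exact (hfb y hy u).2
  have hZlb : ∀ y : EuclideanSpace ℝ (Fin J), ‖y‖ < r → m ≤ Z y := by
    intro y hy
    rw [hZ]
    have := integral_mono (integrable_const m) (hint y hy) (fun u => (hfb y hy u).1)
    simpa using this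
  have hZpos : ∀ y : EuclideanSpace ℝ (Fin J), ‖y‖ < r → 0 < Z y :=
    fun y hy => lt_of_lt_of_le hm0 (hZlb y hy)
  refine ⟨hZpos, ?_⟩
  set Cr : ℝ := max (C r) 1 with hCr
  have hCr0 : 0 < Cr := lt_of_lt_of_le one_pos (le_max_right _ _)
  refine ⟨Cr / s ^ 3, by positivity, ?_⟩
  intro y₁ y₂ hy₁ hy₂
  set D : ℝ := Cr * ‖y₁ - y₂‖ with hD
  have hD0 : 0 ≤ D := by positivity
  have hΦd : ∀ u, |Φ u y₁ - Φ u y₂| ≤ D := by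
    intro u
    refine (hlip r hr u y₁ y₂ hy₁ hy₂).trans ?_
    exact mul_le_mul_of_nonneg_right (le_max_left _ _) (norm_nonneg _)
  -- bound on |Z y₁ - Z y₂|
  have hZd : |Z y₁ - Z y₂| ≤ D := by
    rw [hZ y₁, hZ y₂, ← integral_sub (hint y₁ hy₁) (hint y₂ hy₂)]
    have h1 : |∫ u, (Real.exp (-Φ u y₁) - Real.exp (-Φ u y₂)) ∂μ₀|
        ≤ ∫ u, |Real.exp (-Φ u y₁) - Real.exp (-Φ u y₂)| ∂μ₀ := by
      simpa [Real.norm_eq_abs] using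
        norm_integral_le_integral_norm (μ := μ₀)
          (f := fun u => Real.exp (-Φ u y₁) - Real.exp (-Φ u y₂))
    refine h1.trans ?_
    have h2 : ∫ u, |Real.exp (-Φ u y₁) - Real.exp (-Φ u y₂)| ∂μ₀ ≤ ∫ _u, D ∂μ₀ := by
      refine integral_mono ((hint y₁ hy₁).sub (hint y₂ hy₂)).abs (integrable_const D) ?_
      intro u
      exact (aux_exp_lip (hbound r hr u y₁ hy₁).1 (hbound r hr u y₂ hy₂).1).trans (hΦd u)
    simpa using h2
  -- pointwise bound on the Hellinger integrand
  have hpt : ∀ u, |Real.sqrt (Real.exp (-Φ u y₁) / Z y₁)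
      - Real.sqrt (Real.exp (-Φ u y₂) / Z y₂)| ≤ D / s ^ 3 := by
    intro u
    obtain ⟨ha0, haK⟩ := hbound r hr u y₁ hy₁
    obtain ⟨hb0, hbK⟩ := hbound r hr u y₂ hy₂
    set P : ℝ := Real.sqrt (Z y₁) with hP
    set Q : ℝ := Real.sqrt (Z y₂) with hQ
    have hPs : s ≤ P := by
      rw [hP, ← hsm]; exact Real.sqrt_le_sqrt (hZlb y₁ hy₁)
    have hQs : s ≤ Q := by
      rw [hQ, ← hsm]; exact Real.sqrt_le_sqrt (hZlb y₂ hy₂)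
    have hP0 : 0 < P := lt_of_lt_of_le hs0 hPs
    have hQ0 : 0 < Q := lt_of_lt_of_le hs0 hQs
    set E₁ : ℝ := Real.exp (-Φ u y₁ / 2) with hE₁
    set E₂ : ℝ := Real.exp (-Φ u y₂ / 2) with hE₂
    have hE₂1 : E₂ ≤ 1 := Real.exp_le_one_iff.2 (by linarith)
    have hE₂0 : 0 < E₂ := Real.exp_pos _
    have hEd : |E₁ - E₂| ≤ D / 2 := by
      have h := aux_exp_lip (a := Φ u y₁ / 2) (b := Φ u y₂ / 2)
        (by linarith) (by linarith)
      have h2 : |Φ u y₁ / 2 - Φ u y₂ / 2| = |Φ u y₁ - Φ u y₂| / 2 := by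
        rw [show Φ u y₁ / 2 - Φ u y₂ / 2 = (Φ u y₁ - Φ u y₂) / 2 by ring, abs_div,
          abs_two]
      rw [hE₁, hE₂]
      calc |Real.exp (-(Φ u y₁) / 2) - Real.exp (-(Φ u y₂) / 2)|
          = |Real.exp (-(Φ u y₁ / 2)) - Real.exp (-(Φ u y₂ / 2))| := by ring_nf
        _ ≤ |Φ u y₁ / 2 - Φ u y₂ / 2| := h
        _ = |Φ u y₁ - Φ u y₂| / 2 := h2
        _ ≤ D / 2 := by linarith [hΦd u]
    have hPQd : |P - Q| ≤ D / (2 * s) := by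
      have h := aux_sqrt_lip hm0 (hZlb y₁ hy₁) (hZlb y₂ hy₂)
      rw [hsm] at h
      refine h.trans ?_
      exact div_le_div_of_nonneg_right hZd (by positivity) |>.trans (le_refl _)
    -- rewrite the sqrt of the quotients
    have hrw : ∀ (a : ℝ) (Zv : ℝ), Real.sqrt (Real.exp (-a) / Zv)
        = Real.exp (-a / 2) / Real.sqrt Zv := by
      intro a Zv
      rw [Real.sqrt_div (Real.exp_pos _).le, ← Real.exp_half]
    rw [hrw, hrw]
    have hkey : E₁ / P - E₂ / Q = (E₁ - E₂) / P + E₂ * (Q - P) / (P * Q) := by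
      field_simp
      ring
    rw [show Real.exp (-Φ u y₁ / 2) / Real.sqrt (Z y₁) = E₁ / P from rfl,
        show Real.exp (-Φ u y₂ / 2) / Real.sqrt (Z y₂) = E₂ / Q from rfl, hkey]
    have t1 : |(E₁ - E₂) / P| ≤ (D / 2) / s := by
      rw [abs_div, abs_of_pos hP0]
      exact div_le_div₀ (by positivity) hEd hs0 hPs
    have t2 : |E₂ * (Q - P) / (P * Q)| ≤ (D / (2 * s)) / (s * s) := by
      rw [abs_div, abs_of_pos (mul_pos hP0 hQ0), abs_mul, abs_of_pos hE₂0]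
      refine div_le_div₀ (by positivity) ?_ (by positivity) ?_
      · calc E₂ * |Q - P| ≤ 1 * |Q - P| :=
            mul_le_mul_of_nonneg_right hE₂1 (abs_nonneg _)
          _ = |P - Q| := by rw [one_mul, abs_sub_comm]
          _ ≤ D / (2 * s) := hPQd
      · exact mul_le_mul hPs hQs hs0.le hP0.le
    calc |(E₁ - E₂) / P + E₂ * (Q - P) / (P * Q)|
        ≤ |(E₁ - E₂) / P| + |E₂ * (Q - P) / (P * Q)| := abs_add_le _ _
      _ ≤ (D / 2) / s + (D / (2 * s)) / (s * s) := add_le_add t1 t2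
      _ ≤ D / s ^ 3 := by
          have hss : s * s ≤ 1 := by nlinarith
          have e1 : D / 2 / s = D / (2 * s) := by rw [div_div]
          have e2 : D / (2 * s) / (s * s) = D / (2 * s ^ 3) := by
            rw [div_div]; congr 1; ring
          have e3 : D / (2 * s) ≤ D / (2 * s ^ 3) := by
            rw [div_le_div_iff₀ (by positivity) (by positivity)]
            nlinarith [mul_nonneg (mul_nonneg hD0 hs0.le) (sub_nonneg.2 hss)]
          have e4 : D / (2 * s ^ 3) + D / (2 * s ^ 3) = D / s ^ 3 := by
            field_simp
            ring
          linarith [e1, e2, e3, e4]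
  -- conclude via the integral
  set B : ℝ := (D / s ^ 3) ^ 2 with hB
  set g : U → ℝ := fun u => (Real.sqrt (Real.exp (-Φ u y₁) / Z y₁)
      - Real.sqrt (Real.exp (-Φ u y₂) / Z y₂)) ^ 2 with hg
  have hgmeas : Measurable g := by
    apply Measurable.pow_const
    exact (((hmeas y₁).neg.exp.div_const _).sqrt).sub
      (((hmeas y₂).neg.exp.div_const _).sqrt)
  have hgB : ∀ u, g u ≤ B := by
    intro u
    have h := pow_le_pow_left₀ (abs_nonneg _) (hpt u) 2
    rw [sq_abs] at h
    exact h
  have hgint : Integrable g μ₀ := by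
    refine Integrable.mono' (integrable_const B) hgmeas.aestronglyMeasurable ?_
    filter_upwards with u
    rw [Real.norm_eq_abs, abs_of_nonneg (sq_nonneg _)]
    exact hgB u
  have hginteg : ∫ u, g u ∂μ₀ ≤ B := by
    have := integral_mono hgint (integrable_const B) hgB
    simpa using this
  have hgnn : 0 ≤ ∫ u, g u ∂μ₀ := integral_nonneg fun u => sq_nonneg _
  calc Real.sqrt ((1 / 2) * ∫ u, g u ∂μ₀)
      ≤ Real.sqrt B := Real.sqrt_le_sqrt (by linarith)
    _ = D / s ^ 3 := by rw [hB, Real.sqrt_sq (by positivity)]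
    _ = (Cr / s ^ 3) * ‖y₁ - y₂‖ := by rw [hD]; ring
end
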